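/- Let r ≥ 1 be an integer, V a vector space over ℝ, W a linear subspace of V with dim W ≥ r + 1, and φ : V → V a linear map such that φ(w₁) ∧ ⋯ ∧ φ(w_r) = w₁ ∧ ⋯ ∧ w_r in the r-th exterior power ⋀^r V for all vectors w₁, …, w_r ∈ W. Then W is φ-invariant and the restriction of φ to W is ε·id_W for some ε ∈ {1, −1}; that is, there exists ε ∈ ℝ with ε = 1 or ε = −1 such that φ(w) = ε·w for all w ∈ W. -/

import Mathlib

/-!
If `w₁, …, w_r` are independent and `φ w₁ ∧ ⋯ ∧ φ w_r = w₁ ∧ ⋯ ∧ w_r`, then each `φ wᵢ` lies in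
`span (w₁, …, w_r)`, because `φ wᵢ ∧ w₁ ∧ ⋯ ∧ w_r = 0`. Extending a nonzero `w ∈ W` to `r + 1`
independent vectors of `W` and leaving out each of the other `r` in turn traps `φ w` in the line
`ℝ ∙ w`. So every vector of `W` is an eigenvector, `φ` acts on `W` as a scalar `ε`, and
`ε ^ r = 1` since `∧^r (ε • id) = ε ^ r • id`.
-/
open ExteriorAlgebra Submodule

section LinearAlgebra

variable {K M : Type*} [DivisionRing K] [AddCommGroup M] [Module K M]

theorem LinearIndependent.mem_span_image_iInter {ι κ : Type*} [Nonempty κ] {v : ι → M}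
    (hv : LinearIndependent K v) {s : κ → Set ι} {x : M} (h : ∀ k, x ∈ span K (v '' s k)) :
    x ∈ span K (v '' ⋂ k, s k) := by
  simp only [Finsupp.span_image_eq_map_linearCombination, Finsupp.supported_iInter, mem_map]
    at h ⊢
  obtain ⟨l, -, rfl⟩ := h (Classical.arbitrary κ)
  refine ⟨l, mem_iInf _ |>.2 fun k => ?_, rfl⟩
  obtain ⟨l', hl', hl'l⟩ := h k
  rwa [← hv hl'l]

theorem LinearIndependent.mem_span_singleton_of_forall_mem_span_compl {ι : Type*}
    [Nontrivial ι] {v : ι → M} (hv : LinearIndependent K v) {i : ι} {x : M}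
    (h : ∀ j ≠ i, x ∈ span K (v '' {j}ᶜ)) : x ∈ K ∙ v i := by
  have : Nonempty {j // j ≠ i} := nonempty_subtype.2 (exists_ne i)
  have hi : ⋂ j : {j // j ≠ i}, {j.1}ᶜ = {i} := by
    ext j
    simp only [Set.mem_iInter, Set.mem_compl_iff, Set.mem_singleton_iff, Subtype.forall]
    exact ⟨fun hj => by_contra fun hji => hj j hji rfl, by rintro rfl k hk rfl; exact hk rfl⟩
  simpa [hi] using
    hv.mem_span_image_iInter (s := fun j : {j // j ≠ i} => {j.1}ᶜ) fun j => h j j.2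

theorem exists_linearIndependent_cons_of_le_rank {x : M} (hx : x ≠ 0) {n : ℕ}
    (h : (n + 1 : Cardinal) ≤ Module.rank K M) :
    ∃ v : Fin n → M, LinearIndependent K (Fin.cons x v : Fin (n + 1) → M) := by
  induction n with
  | zero =>
    exact ⟨Fin.elim0, linearIndependent_finCons.2 ⟨linearIndependent_empty_type, by simpa⟩⟩
  | succ n ih =>
    obtain ⟨v, hv⟩ := ih (le_trans (by norm_cast; omega) h)
    obtain ⟨y, hy⟩ := exists_linearIndependent_snoc_of_lt_rank hv
      (lt_of_lt_of_le (by norm_cast; omega) h)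
    exact ⟨Fin.snoc v y, by rwa [Fin.cons_snoc_eq_snoc_cons]⟩

theorem not_linearIndependent_pair_of_mem_span_singleton {x y : M} (h : y ∈ K ∙ x) :
    ¬LinearIndependent K ![x, y] := by
  obtain ⟨c, rfl⟩ := mem_span_singleton.1 h
  intro hlin
  simpa using (LinearIndependent.pair_iff.1 hlin c (-1) (by simp)).2

end LinearAlgebra

section ExteriorAlgebra

variable {K V : Type*} [Field K] [AddCommGroup V] [Module K V] {n : ℕ}

theorem ιMulti_ne_zero_of_linearIndependent {v : Fin n → V} (hv : LinearIndependent K v) :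
    ιMulti K n v ≠ 0 := by
  have := (exteriorPower.ιMulti_family_linearIndependent_field (n := n) hv).ne_zero
    (Set.powersetCard.ofFinEmbEquiv (OrderIso.refl (Fin n)).toOrderEmbedding)
  rw [Ne, ← exteriorPower.ιMulti_apply_coe, ZeroMemClass.coe_eq_zero]
  simpa [exteriorPower.ιMulti_family] using this

theorem mem_span_of_ι_mul_ιMulti_eq_zero {v : Fin n → V} (hv : LinearIndependent K v) {x : V}
    (h : ι K x * ιMulti K n v = 0) : x ∈ span K (Set.range v) := by
  by_contra hx
  refine ιMulti_ne_zero_of_linearIndependent (linearIndependent_finCons.2 ⟨hv, hx⟩) ?_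
  rwa [ιMulti_succ_apply]

theorem mem_span_of_ιMulti_eq {u v : Fin n → V} (hv : LinearIndependent K v)
    (h : ιMulti K n u = ιMulti K n v) (i : Fin n) : u i ∈ span K (Set.range v) := by
  refine mem_span_of_ι_mul_ιMulti_eq_zero hv ?_
  have := (ιMulti K (n + 1)).map_eq_zero_of_eq (Fin.cons (u i) u) (i := 0) (j := i.succ)
    (by simp) (Fin.succ_ne_zero i).symm
  rw [← h]
  simpa [ιMulti_succ_apply, Matrix.vecTail] using this

theorem pow_eq_one_of_ιMulti_smul_eq {v : Fin n → V} (hv : LinearIndependent K v) {c : K}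
    (h : ιMulti K n (fun i => c • v i) = ιMulti K n v) : c ^ n = 1 := by
  have hsmul : ιMulti K n (fun i => c • v i) = c ^ n • ιMulti K n v := by
    have := (ιMulti K n).map_smul_univ (fun _ => c) v
    rwa [Finset.prod_const, Finset.card_univ, Fintype.card_fin] at this
  have h' : (c ^ n - 1) • ιMulti K n v = 0 := by
    rw [sub_smul, one_smul, sub_eq_zero, ← hsmul, h]
  by_contra hc
  exact ιMulti_ne_zero_of_linearIndependent hv
    ((smul_eq_zero.1 h').resolve_left (sub_ne_zero.2 hc))

end ExteriorAlgebra

theorem apply_mem_span_singleton_of_forall_ιMulti_map_eq {K V : Type*} [Field K]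
    [AddCommGroup V] [Module K V] {r : ℕ} (hr : 1 ≤ r) {W : Submodule K V}
    (hW : (r + 1 : Cardinal) ≤ Module.rank K W) {φ : V →ₗ[K] V}
    (hφ : ∀ w : Fin r → V, (∀ i, w i ∈ W) →
      ιMulti K r (fun i => φ (w i)) = ιMulti K r w)
    {w : V} (hw : w ∈ W) : φ w ∈ K ∙ w := by
  rcases eq_or_ne w 0 with rfl | hw0
  · simp
  obtain ⟨b, hb⟩ := exists_linearIndependent_cons_of_le_rank
    (x := (⟨w, hw⟩ : W)) (by simpa using hw0) hW
  set e : Fin (r + 1) → V := W.subtype ∘ Fin.cons ⟨w, hw⟩ b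
  have he : LinearIndependent K e := hb.map' W.subtype W.ker_subtype
  have : Nontrivial (Fin (r + 1)) := Fin.nontrivial_iff_two_le.2 (by omega)
  refine he.mem_span_singleton_of_forall_mem_span_compl (i := 0) fun j hj => ?_
  obtain ⟨k, hk⟩ := Fin.exists_succAbove_eq hj.symm
  have := mem_span_of_ιMulti_eq (he.comp _ Fin.succAbove_right_injective)
    (hφ (e ∘ j.succAbove) fun i => Subtype.prop _) k
  simpa [hk, Set.range_comp, e] using this

/-- **Lemma (rigidity).** Let `r ≥ 1`, `V` a real vector space, `W ≤ V` with
`dim W ≥ r + 1`, and `φ : V → V` linear such that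
`φ w₁ ∧ ⋯ ∧ φ w_r = w₁ ∧ ⋯ ∧ w_r` in `⋀^r V` for all `w₁, …, w_r ∈ W`.
Then `W` is `φ`-invariant and `φ|_W = ε • id` for some `ε ∈ {1, -1}`. -/
theorem stmt_0 (r : ℕ) (hr : 1 ≤ r) (V : Type*) [AddCommGroup V] [Module ℝ V]
    (W : Submodule ℝ V) (hW : (r + 1 : Cardinal) ≤ Module.rank ℝ W)
    (φ : V →ₗ[ℝ] V)
    (hφ : ∀ w : Fin r → V, (∀ i, w i ∈ W) →
      ExteriorAlgebra.ιMulti ℝ r (fun i => φ (w i)) = ExteriorAlgebra.ιMulti ℝ r w) :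
    (∀ w ∈ W, φ w ∈ W) ∧
      ∃ ε : ℝ, (ε = 1 ∨ ε = -1) ∧ ∀ w ∈ W, φ w = ε • w := by
  have hspan : ∀ w ∈ W, φ w ∈ ℝ ∙ w := fun w hw =>
    apply_mem_span_singleton_of_forall_ιMulti_map_eq hr hW hφ hw
  have hinv : ∀ w ∈ W, φ w ∈ W := fun w hw =>
    (span_singleton_le_iff_mem _ _).2 hw (hspan w hw)
  obtain ⟨ε, hε⟩ := LinearMap.exists_eq_smul_id_of_forall_notLinearIndependent
    (f := φ.restrict hinv) fun w => not_linearIndependent_pair_of_mem_span_singleton <| by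
      obtain ⟨c, hc⟩ := mem_span_singleton.1 (hspan w w.2)
      exact mem_span_singleton.2 ⟨c, Subtype.ext hc⟩
  have heig : ∀ w ∈ W, φ w = ε • w := fun w hw =>
    congrArg Subtype.val (LinearMap.congr_fun hε ⟨w, hw⟩)
  obtain ⟨v, hv⟩ := exists_linearIndependent_of_le_rank (R := ℝ) (M := W) (n := r)
    (le_trans (by norm_cast; omega) hW)
  have hpow : ε ^ r = 1 := pow_eq_one_of_ιMulti_smul_eq (v := fun i => (v i : V))
    (hv.map' W.subtype W.ker_subtype)
    (by simpa [heig] using hφ _ fun i => (v i).2)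
  refine ⟨hinv, ε, ?_, heig⟩
  exact ((pow_eq_one_iff_of_ne_zero (by omega)).1 hpow).imp_right And.left
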